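/- Let σ = σ_β be the softplus activation σ_β(x) = (1/β)·log(e^{βx} + 1) with β > 0. Then for all x ∈ ℝ: (a) σ'(x)² > σ(x)·σ''(x), i.e., σ is strictly log-concave; (b) the function x ↦ σ(x)/σ'(x) is strictly increasing and convex on ℝ; (c) the function x ↦ x·σ'(x)/σ(x) is strictly increasing on ℝ; and (d) σ'''(x)·σ'(x) ≤ σ''(x)², i.e., σ' is log-concave. -/

import Mathlib

/-!
Write `s = sigmoid (β x)` and `t = exp (β x)`. Then `σ' = s`, `σ'' = β s (1 - s)`,
`σ''' = β² s (1 - s) (1 - 2 s)`, and `σ σ'' / σ'² = log (1 + t) / t` is the slope of the secant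
of the concave `log` between `1` and `1 + t`: it is `< 1`, which is (a), and decreasing in `x`.
Since `(σ / σ')' = 1 - σ σ'' / σ'²`, this gives (b). In (d) the gap is `β² s³ (1 - s) ≥ 0`.
For (c), the derivative of `x σ' / σ` has numerator `σ σ' - x (σ'² - σ σ'')`; by (a) it is
positive for `x ≤ 0`, and for `x > 0` because `x < σ x` and `σ'² - σ σ'' ≤ σ'`
(as `0 < σ' ≤ 1` and `σ σ'' ≥ 0`).
-/

open Real

noncomputable def softplus (β x : ℝ) : ℝ := (1 / β) * Real.log (Real.exp (β * x) + 1)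

section DivDeriv

variable {f : ℝ → ℝ}

theorem hasDerivAt_div_deriv {f'' x : ℝ} (hf : DifferentiableAt ℝ f x)
    (hf' : HasDerivAt (deriv f) f'' x) (hd : deriv f x ≠ 0) :
    HasDerivAt (fun y => f y / deriv f y) (1 - f x * f'' / deriv f x ^ 2) x :=
  (hf.hasDerivAt.div hf' hd).congr_deriv (by field_simp)

variable (hf : Differentiable ℝ f) (hf' : Differentiable ℝ (deriv f)) (hd : ∀ x, deriv f x ≠ 0)
include hf hf' hd

theorem deriv_div_deriv :
    deriv (fun y => f y / deriv f y) =
      fun x => 1 - f x * deriv (deriv f) x / deriv f x ^ 2 :=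
  funext fun x => (hasDerivAt_div_deriv (hf x) (hf' x).hasDerivAt (hd x)).deriv

theorem differentiable_div_deriv : Differentiable ℝ fun y => f y / deriv f y :=
  fun x => (hasDerivAt_div_deriv (hf x) (hf' x).hasDerivAt (hd x)).differentiableAt

theorem strictMono_div_deriv (hlc : ∀ x, f x * deriv (deriv f) x < deriv f x ^ 2) :
    StrictMono fun x => f x / deriv f x := by
  refine strictMono_of_deriv_pos fun x => ?_
  rw [deriv_div_deriv hf hf' hd, sub_pos, div_lt_one (sq_pos_of_ne_zero (hd x))]
  exact hlc x

theorem convexOn_univ_div_deriv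
    (hanti : Antitone fun x => f x * deriv (deriv f) x / deriv f x ^ 2) :
    ConvexOn ℝ Set.univ fun x => f x / deriv f x := by
  refine Monotone.convexOn_univ_of_deriv (differentiable_div_deriv hf hf' hd) ?_
  rw [deriv_div_deriv hf hf' hd]
  exact fun a b hab => sub_le_sub_left (hanti hab) 1

end DivDeriv

theorem strictMono_mul_deriv_div {f : ℝ → ℝ} (hf : Differentiable ℝ f)
    (hf' : Differentiable ℝ (deriv f)) (hpos : ∀ x, 0 < f x) (hlt : ∀ x, x < f x)
    (hd_pos : ∀ x, 0 < deriv f x) (hd_le : ∀ x, deriv f x ≤ 1) (hd2 : ∀ x, 0 ≤ deriv (deriv f) x)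
    (hlc : ∀ x, f x * deriv (deriv f) x < deriv f x ^ 2) :
    StrictMono fun x => x * deriv f x / f x := by
  refine strictMono_of_deriv_pos fun x => ?_
  have h := ((hasDerivAt_id' x).fun_mul (hf' x).hasDerivAt).fun_div (hf x).hasDerivAt (hpos x).ne'
  rw [h.deriv]
  refine div_pos ?_ (pow_pos (hpos x) 2)
  set a := f x
  set b := deriv f x
  set c := deriv (deriv f) x
  have hD : 0 < b ^ 2 - a * c := sub_pos.mpr (hlc x)
  have hab : 0 < a * b := mul_pos (hpos x) (hd_pos x)
  have key : x * (b ^ 2 - a * c) < a * b := by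
    rcases le_or_gt x 0 with hx | hx
    · exact (mul_nonpos_of_nonpos_of_nonneg hx hD.le).trans_lt hab
    · have hDb : b ^ 2 - a * c ≤ b := by
        nlinarith [mul_nonneg (hpos x).le (hd2 x), hd_pos x, hd_le x]
      calc x * (b ^ 2 - a * c) < a * (b ^ 2 - a * c) := mul_lt_mul_of_pos_right (hlt x) hD
        _ ≤ a * b := mul_le_mul_of_nonneg_left hDb (hpos x).le
  linear_combination key

theorem sigmoid_eq_exp_div (y : ℝ) : sigmoid y = exp y / (exp y + 1) := by
  rw [sigmoid_def, exp_neg]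
  field_simp

theorem strictAnti_log_exp_add_one_div_exp : StrictAnti fun y => log (exp y + 1) / exp y := by
  intro a b hab
  have h := strictConcaveOn_log_Ioi.secant_strict_mono (a := 1) (x := exp a + 1) (y := exp b + 1)
    (Set.mem_Ioi.mpr one_pos) (Set.mem_Ioi.mpr (by positivity)) (Set.mem_Ioi.mpr (by positivity))
    (by simp [(exp_pos a).ne']) (by simp [(exp_pos b).ne']) (by simpa using hab)
  simpa using h

theorem log_exp_add_one_div_exp_lt_one (y : ℝ) : log (exp y + 1) / exp y < 1 := by
  rw [div_lt_one (exp_pos y)]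
  linarith [log_lt_sub_one_of_pos (by positivity : 0 < exp y + 1) (by simp [(exp_pos y).ne'])]

section Softplus

variable {β : ℝ}

theorem hasDerivAt_softplus (hβ : β ≠ 0) (x : ℝ) :
    HasDerivAt (softplus β) (sigmoid (β * x)) x := by
  have h := ((((hasDerivAt_id' x).const_mul β).exp.add_const 1).log
    (by positivity)).const_mul (1 / β)
  refine h.congr_deriv ?_
  rw [sigmoid_eq_exp_div]
  field_simp

theorem deriv_softplus (hβ : β ≠ 0) : deriv (softplus β) = fun x => sigmoid (β * x) :=
  funext fun x => (hasDerivAt_softplus hβ x).deriv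

theorem hasDerivAt_sigmoid_const_mul (β x : ℝ) :
    HasDerivAt (fun x => sigmoid (β * x)) (β * (sigmoid (β * x) * (1 - sigmoid (β * x)))) x := by
  refine ((hasDerivAt_sigmoid (β * x)).comp x ((hasDerivAt_id' x).const_mul β)).congr_deriv ?_
  ring

theorem deriv_deriv_softplus (hβ : β ≠ 0) :
    deriv (deriv (softplus β)) = fun x => β * (sigmoid (β * x) * (1 - sigmoid (β * x))) := by
  rw [deriv_softplus hβ]
  exact funext fun x => (hasDerivAt_sigmoid_const_mul β x).deriv

theorem deriv_deriv_deriv_softplus (hβ : β ≠ 0) (x : ℝ) :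
    deriv (deriv (deriv (softplus β))) x =
      β ^ 2 * (sigmoid (β * x) * (1 - sigmoid (β * x)) * (1 - 2 * sigmoid (β * x))) := by
  rw [deriv_deriv_softplus hβ]
  have hs := hasDerivAt_sigmoid_const_mul β x
  convert ((hs.fun_mul (hs.const_sub 1)).const_mul β).deriv using 1
  ring

theorem softplus_pos (hβ : 0 < β) (x : ℝ) : 0 < softplus β x :=
  mul_pos (by positivity) (log_pos (by linarith [exp_pos (β * x)]))

theorem lt_softplus (hβ : 0 < β) (x : ℝ) : x < softplus β x := by
  have h : β * x < log (exp (β * x) + 1) := by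
    simpa using log_lt_log (exp_pos (β * x)) (lt_add_one (exp (β * x)))
  rw [softplus, one_div, ← div_eq_inv_mul, lt_div_iff₀ hβ]
  linarith

theorem differentiable_softplus (hβ : β ≠ 0) : Differentiable ℝ (softplus β) :=
  fun x => (hasDerivAt_softplus hβ x).differentiableAt

theorem differentiable_deriv_softplus (hβ : β ≠ 0) : Differentiable ℝ (deriv (softplus β)) := by
  rw [deriv_softplus hβ]
  exact fun x => (hasDerivAt_sigmoid_const_mul β x).differentiableAt

theorem deriv_softplus_pos (hβ : β ≠ 0) (x : ℝ) : 0 < deriv (softplus β) x := by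
  simp [deriv_softplus hβ, sigmoid_pos]

theorem deriv_softplus_le_one (hβ : β ≠ 0) (x : ℝ) : deriv (softplus β) x ≤ 1 := by
  simp [deriv_softplus hβ, sigmoid_le_one]

theorem deriv_deriv_softplus_nonneg (hβ : 0 < β) (x : ℝ) : 0 ≤ deriv (deriv (softplus β)) x := by
  rw [deriv_deriv_softplus hβ.ne']
  exact mul_nonneg hβ.le (mul_nonneg (sigmoid_nonneg _) (sub_nonneg.mpr (sigmoid_le_one _)))

theorem softplus_mul_deriv_deriv_div_sq (hβ : β ≠ 0) (x : ℝ) :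
    softplus β x * deriv (deriv (softplus β)) x / deriv (softplus β) x ^ 2 =
      log (exp (β * x) + 1) / exp (β * x) := by
  rw [deriv_deriv_softplus hβ, deriv_softplus hβ]
  beta_reduce
  rw [sigmoid_eq_exp_div, softplus]
  field_simp
  ring

theorem softplus_mul_deriv_deriv_lt_sq (hβ : β ≠ 0) (x : ℝ) :
    softplus β x * deriv (deriv (softplus β)) x < deriv (softplus β) x ^ 2 := by
  rw [← div_lt_one (pow_pos (deriv_softplus_pos hβ x) 2), softplus_mul_deriv_deriv_div_sq hβ]
  exact log_exp_add_one_div_exp_lt_one _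

theorem antitone_softplus_mul_deriv_deriv_div_sq (hβ : 0 < β) :
    Antitone fun x => softplus β x * deriv (deriv (softplus β)) x / deriv (softplus β) x ^ 2 := by
  simp only [softplus_mul_deriv_deriv_div_sq hβ.ne']
  exact strictAnti_log_exp_add_one_div_exp.antitone.comp_monotone
    fun a b hab => mul_le_mul_of_nonneg_left hab hβ.le

theorem deriv_deriv_deriv_softplus_mul_le (hβ : β ≠ 0) (x : ℝ) :
    deriv (deriv (deriv (softplus β))) x * deriv (softplus β) x ≤
      deriv (deriv (softplus β)) x ^ 2 := by
  rw [deriv_deriv_deriv_softplus hβ, deriv_deriv_softplus hβ, deriv_softplus hβ]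
  set s := sigmoid (β * x)
  have hgap : (β * (s * (1 - s))) ^ 2 - β ^ 2 * (s * (1 - s) * (1 - 2 * s)) * s =
      β ^ 2 * s ^ 3 * (1 - s) := by ring
  have : 0 ≤ β ^ 2 * s ^ 3 * (1 - s) :=
    mul_nonneg (mul_nonneg (sq_nonneg β) (pow_nonneg (sigmoid_nonneg _) 3))
      (sub_nonneg.mpr (sigmoid_le_one _))
  linarith

end Softplus

/-- Properties of softplus: (a) strict log-concavity `σ'² > σσ''`;
(b) `σ/σ'` is strictly increasing and convex; (c) `x·σ'/σ` is strictly increasing;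
(d) `σ'` is log-concave, i.e. `σ'''σ' ≤ σ''²`. -/
theorem softplus_properties (β : ℝ) (hβ : 0 < β) :
    (∀ x : ℝ, softplus β x * deriv (deriv (softplus β)) x < deriv (softplus β) x ^ 2) ∧
    (StrictMono (fun x : ℝ => softplus β x / deriv (softplus β) x) ∧
      ConvexOn ℝ Set.univ (fun x : ℝ => softplus β x / deriv (softplus β) x)) ∧
    StrictMono (fun x : ℝ => x * deriv (softplus β) x / softplus β x) ∧
    (∀ x : ℝ, deriv (deriv (deriv (softplus β))) x * deriv (softplus β) x ≤
      deriv (deriv (softplus β)) x ^ 2) := by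
  have hβ₀ := hβ.ne'
  have hf := differentiable_softplus hβ₀
  have hf' := differentiable_deriv_softplus hβ₀
  have hd x := (deriv_softplus_pos hβ₀ x).ne'
  have hlc := softplus_mul_deriv_deriv_lt_sq hβ₀
  refine ⟨hlc, ⟨strictMono_div_deriv hf hf' hd hlc, ?_⟩, ?_, deriv_deriv_deriv_softplus_mul_le hβ₀⟩
  · exact convexOn_univ_div_deriv hf hf' hd (antitone_softplus_mul_deriv_deriv_div_sq hβ)
  · exact strictMono_mul_deriv_div hf hf' (softplus_pos hβ) (lt_softplus hβ)
      (deriv_softplus_pos hβ₀) (deriv_softplus_le_one hβ₀) (deriv_deriv_softplus_nonneg hβ) hlc
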